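/- arXiv:2104.07121 — 2 statements merged into one kernel-verified Lean document; each statement's English description precedes it below -/
import Mathlib

section
/- Let n ≥ 1 and let K_{n+1} be the complete graph on n + 1 vertices. For every vertex P of K_{n+1}, the rank Weierstrass set of K_{n+1} at P equals the numerical semigroup generated by n and n + 1, i.e., H_r(P) = { an + b(n+1) : a, b ∈ ℕ }. -/
open scoped Classical

/-- A graph: a finite connected multigraph with no loop edges, given by a symmetric
edge-multiplicity function on a finite nonempty vertex type. -/
structure Multigraph where
  V : Type
  [fintypeV : Fintype V]
  [decEqV : DecidableEq V]
  [nonemptyV : Nonempty V]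
  adj : V → V → ℕ
  adj_symm : ∀ u v, adj u v = adj v u
  adj_loopless : ∀ v, adj v v = 0
  conn : ∀ u v, Relation.ReflTransGen (fun a b => adj a b ≠ 0) u v

attribute [instance] Multigraph.fintypeV Multigraph.decEqV Multigraph.nonemptyV

namespace Multigraph

variable (G : Multigraph)

/-- A simple graph: no multiple edges and more than one vertex. -/
def Simple : Prop :=
  (∀ u v, G.adj u v ≤ 1) ∧ 1 < Fintype.card G.V

/-- The degree of a divisor. -/
def deg (D : G.V → ℤ) : ℤ := ∑ v, D v

/-- A divisor is effective if all its coefficients are nonnegative. -/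
def Effective (D : G.V → ℤ) : Prop := ∀ v, 0 ≤ D v

/-- The Laplacian of an integer-valued function on the vertices. -/
def lap (f : G.V → ℤ) : G.V → ℤ := fun v => ∑ w, (G.adj v w : ℤ) * (f v - f w)

/-- The linear system `|D|` is nonempty, i.e. `D` is linearly equivalent to an
effective divisor. -/
def LinNonempty (D : G.V → ℤ) : Prop :=
  ∃ f : G.V → ℤ, G.Effective (D - G.lap f)

/-- The Baker–Norine rank of a divisor: `-1` if `|D| = ∅`, otherwise the maximal
`k` such that `|D - E| ≠ ∅` for every effective divisor `E` of degree `k`. -/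
noncomputable def rank (D : G.V → ℤ) : ℤ :=
  if G.LinNonempty D then
    ((sSup {k : ℕ | ∀ E : G.V → ℤ, G.Effective E → G.deg E = (k : ℤ) →
        G.LinNonempty (D - E)} : ℕ) : ℤ)
  else -1

/-- The divisor `n • P`. -/
def pt (P : G.V) (n : ℤ) : G.V → ℤ := fun v => if v = P then n else 0

/-- The rank Weierstrass set of `G` at `P`. -/
def Hr (P : G.V) : Set ℕ :=
  {n : ℕ | G.rank (G.pt P ((n : ℤ) - 1)) < G.rank (G.pt P (n : ℤ))}

/-- The functional Weierstrass set of `G` at `P`: pole orders at `P` of functions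
with a unique pole at `P`. -/
def Hf (P : G.V) : Set ℕ :=
  {n : ℕ | ∃ f : G.V → ℤ, G.lap f P = -(n : ℤ) ∧ ∀ Q, Q ≠ P → 0 ≤ G.lap f Q}

/-- The number of edges joining `Q` to vertices outside `A`. -/
def outdeg (A : Finset G.V) (Q : G.V) : ℕ := ∑ R ∈ Aᶜ, G.adj Q R

/-- A divisor is `P`-reduced. -/
def Reduced (P : G.V) (D : G.V → ℤ) : Prop :=
  (∀ Q, Q ≠ P → 0 ≤ D Q) ∧
  ∀ A : Finset G.V, A.Nonempty → P ∉ A → ∃ Q ∈ A, D Q < (G.outdeg A Q : ℤ)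

/-- `G` is the graph `B_n` with two vertices joined by `n` parallel edges. -/
def IsBanana (n : ℕ) : Prop :=
  Fintype.card G.V = 2 ∧ ∀ u v, u ≠ v → G.adj u v = n

/-- `G` is the complete graph on `n` vertices. -/
def IsComplete (n : ℕ) : Prop :=
  Fintype.card G.V = n ∧ ∀ u v, u ≠ v → G.adj u v = 1

/-- `G` is the complete bipartite graph with parts `A` (of size `m`) and its
complement (of size `n`). -/
def IsCompleteBipartite (A : Finset G.V) (m n : ℕ) : Prop :=
  A.card = m ∧ Aᶜ.card = n ∧
  ∀ u v, G.adj u v = if (u ∈ A ∧ v ∉ A) ∨ (u ∉ A ∧ v ∈ A) then 1 else 0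

/-- `λ_Q(k)`: the least `n` with `r(nQ) = k`. -/
noncomputable def lam (Q : G.V) (k : ℕ) : ℕ :=
  sInf {n : ℕ | G.rank (G.pt Q (n : ℤ)) = (k : ℤ)}

end Multigraph

/-- `G` is the vertex gluing of `G₁` and `G₂` identifying `P₁` and `P₂` into `P`. -/
def IsVertexGluing (G G₁ G₂ : Multigraph) (P : G.V) (P₁ : G₁.V) (P₂ : G₂.V) : Prop :=
  ∃ (ι₁ : G₁.V → G.V) (ι₂ : G₂.V → G.V),
    Function.Injective ι₁ ∧ Function.Injective ι₂ ∧
    ι₁ P₁ = P ∧ ι₂ P₂ = P ∧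
    (∀ a b, ι₁ a = ι₂ b → ι₁ a = P) ∧
    (∀ v : G.V, (∃ a, ι₁ a = v) ∨ (∃ b, ι₂ b = v)) ∧
    (∀ a b, G.adj (ι₁ a) (ι₁ b) = G₁.adj a b) ∧
    (∀ a b, G.adj (ι₂ a) (ι₂ b) = G₂.adj a b) ∧
    (∀ a b, ι₁ a ≠ P → ι₂ b ≠ P → G.adj (ι₁ a) (ι₂ b) = 0)

/-!
On `K_{n+1}` the Laplacian is `f ↦ (n + 1) f - ∑ f`, so a divisor `D` is equivalent to an
effective one iff for some shift `σ` the residues of `D + σ` modulo `n + 1` at the `n` vertices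
other than `P` sum to at most `deg D`. For `D = mP - E` only the residues `r` of `E` off `P`
matter, and at shift `s ≤ n` their sum is `n s - ∑ r + (n + 1) #{v | s < r v}`.
Every element of `⟨n, n + 1⟩` is `n s + (n + 1) t` for a unique `s ≤ n`; comparing the tail
counts `#{v | s < r v}` with the number of such `t` for each `s` shows
`r(mP) = #(⟨n, n + 1⟩ ∩ [0, m]) - 1`, the extremal `E` being the conjugate partition of these
fibre counts. Hence `r(mP)` jumps exactly at the elements of `⟨n, n + 1⟩`.
-/

open Finset

def consecSemigroup (n : ℕ) : Set ℕ := {x | ∃ a b : ℕ, x = a * n + b * (n + 1)}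

namespace consecSemigroup

noncomputable def count (n M : ℕ) : ℕ := #{x ∈ range (M + 1) | x ∈ consecSemigroup n}

def countFiber (n s M : ℕ) : ℕ := #{t ∈ range (M + 1) | n * s + (n + 1) * t ≤ M}

variable {n : ℕ}

lemma countFiber_le_iff {s M c : ℕ} : countFiber n s M ≤ c ↔ M < n * s + (n + 1) * c := by
  constructor
  · intro h
    by_contra! hc
    have hsub : range (c + 1) ⊆ {t ∈ range (M + 1) | n * s + (n + 1) * t ≤ M} := by
      intro t ht
      simp only [mem_range, mem_filter] at ht ⊢
      have : (n + 1) * t ≤ (n + 1) * c := Nat.mul_le_mul_left _ (by omega)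
      constructor <;> nlinarith
    have := card_le_card hsub
    simp only [card_range] at this
    unfold countFiber at h
    omega
  · intro h
    calc countFiber n s M ≤ #(range c) := by
          refine card_le_card fun t ht => ?_
          simp only [mem_range, mem_filter] at ht ⊢
          by_contra! htc
          have : (n + 1) * c ≤ (n + 1) * t := Nat.mul_le_mul_left _ htc
          omega
      _ = c := card_range c

lemma countFiber_antitone (M : ℕ) : Antitone fun s => countFiber n s M := by
  intro s s' hss'
  refine card_le_card fun t ht => ?_
  simp only [mem_range, mem_filter] at ht ⊢
  have := Nat.mul_le_mul_left n hss'
  omega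

lemma count_eq_sum_countFiber (M : ℕ) :
    count n M = ∑ s ∈ range (n + 1), countFiber n s M := by
  unfold countFiber
  rw [← card_sigma]
  symm
  refine card_nbij (fun p => n * p.1 + (n + 1) * p.2) ?_ ?_ ?_
  · rintro ⟨s, t⟩ hst
    simp only [coe_sigma, Set.mem_sigma_iff, mem_coe, mem_range, mem_filter] at hst
    simp only [coe_filter, mem_range, Set.mem_ofPred_eq]
    exact ⟨by omega, s, t, by ring⟩
  · rintro ⟨s, t⟩ hst ⟨s', t'⟩ hst' h
    simp only [coe_sigma, Set.mem_sigma_iff, mem_coe, mem_range, mem_filter] at hst hst' h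
    -- adding `s + s'` to both sides turns `n * s` into `(n + 1) * s`; then reduce mod `n + 1`
    have hmod : ((n + 1) * (s + t) + s') % (n + 1) = ((n + 1) * (s' + t') + s) % (n + 1) := by
      congr 1
      nlinarith
    simp only [Nat.mul_add_mod_self_left, Nat.mod_eq_of_lt hst.1, Nat.mod_eq_of_lt hst'.1] at hmod
    subst hmod
    have : (n + 1) * t = (n + 1) * t' := by omega
    simp_all
  · rintro x hx
    simp only [coe_filter, mem_range, Set.mem_ofPred_eq] at hx
    obtain ⟨hxM, a, b, rfl⟩ := hx
    have hs := Nat.mod_lt a n.succ_pos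
    obtain ⟨s, q, hsa, rfl⟩ : ∃ s q, s < n + 1 ∧ a = s + (n + 1) * q :=
      ⟨_, _, hs, (Nat.mod_add_div a (n + 1)).symm⟩
    have hval : n * s + (n + 1) * (b + n * q) = (s + (n + 1) * q) * n + b * (n + 1) := by ring
    refine ⟨⟨s, b + n * q⟩, ?_, hval⟩
    simp only [coe_sigma, Set.mem_sigma_iff, mem_coe, mem_range, mem_filter]
    have : b + n * q ≤ (n + 1) * (b + n * q) := Nat.le_mul_of_pos_left _ n.succ_pos
    omega

lemma count_succ (M : ℕ) :
    count n (M + 1) = count n M + if M + 1 ∈ consecSemigroup n then 1 else 0 := by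
  unfold count
  rw [range_add_one, filter_insert]
  split_ifs
  · exact card_insert_of_notMem fun h => by simp at h
  · rfl

lemma count_le_add {M m : ℕ} (h : M ≤ m) : count n m ≤ count n M + (m - M) := by
  induction m, h using Nat.le_induction with
  | base => simp
  | succ m hMm ih =>
    rw [count_succ]
    split_ifs <;> omega

lemma count_eq_add {M m : ℕ} (h : M ≤ m)
    (hmem : ∀ x, M < x → x ≤ m → x ∈ consecSemigroup n) : count n m = count n M + (m - M) := by
  induction m, h using Nat.le_induction with
  | base => simp
  | succ m hMm ih =>
    rw [count_succ, if_pos (hmem _ (by omega) le_rfl), ih fun x hx hxm => hmem x hx (by omega)]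
    omega

lemma count_zero : count n 0 = 1 := by
  simp only [count, zero_add, range_one]
  rw [filter_singleton, if_pos ⟨0, 0, by ring⟩, card_singleton]

lemma one_le_count (M : ℕ) : 1 ≤ count n M :=
  card_pos.2 ⟨0, mem_filter.2 ⟨by simp, 0, 0, by ring⟩⟩

lemma mem_of_le (hn : 1 ≤ n) {x : ℕ} (hx : n * (n - 1) ≤ x) : x ∈ consecSemigroup n := by
  obtain ⟨r, q, hr, rfl⟩ : ∃ r q, r < n ∧ x = r + n * q :=
    ⟨_, _, Nat.mod_lt x hn, (Nat.mod_add_div x n).symm⟩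
  have hrq : r ≤ q := by
    by_contra! h
    have : n * (q + 1) ≤ n * (n - 1) := Nat.mul_le_mul_left n (by omega)
    nlinarith
  exact ⟨q - r, r, by zify [hrq]; ring⟩

lemma count_le (M : ℕ) : count n M ≤ M + 1 :=
  (card_filter_le _ _).trans (card_range _).le

section Residues

variable {ι : Type*} [Fintype ι]

lemma sum_card_filter_lt {K : ℕ} {r : ι → ℕ} (hr : ∀ x, r x ≤ K) :
    ∑ s ∈ range K, #{x | s < r x} = ∑ x, r x := by
  simp only [card_filter]
  rw [sum_comm]
  refine sum_congr rfl fun x _ => ?_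
  have hfilter : {s ∈ range K | s < r x} = range (r x) := by
    ext s
    simp only [mem_filter, mem_range]
    have := hr x
    omega
  rw [← card_filter, hfilter, card_range]

lemma exists_card_filter_lt_eq {c : ℕ → ℕ} (hc : Antitone c) (hc0 : c 0 ≤ Fintype.card ι)
    {K : ℕ} (hK : c K = 0) : ∃ r : ι → ℕ, (∀ x, r x ≤ K) ∧ ∀ s, #{x | s < r x} = c s := by
  let e := Fintype.equivFin ι
  have key : ∀ i s, s < #{s' ∈ range K | i < c s'} ↔ i < c s := by
    intro i s
    constructor
    · intro h
      by_contra! hcs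
      have hsub : {s' ∈ range K | i < c s'} ⊆ range s := fun s' hs' => by
        simp only [mem_filter, mem_range] at hs' ⊢
        by_contra! h'
        exact absurd (hc h') (by omega)
      have := card_le_card hsub
      simp only [card_range] at this
      omega
    · intro h
      have hsK : s < K := by
        by_contra! h'
        have := hc h'
        omega
      have hsub : range (s + 1) ⊆ {s' ∈ range K | i < c s'} := fun s' hs' => by
        simp only [mem_filter, mem_range] at hs' ⊢
        exact ⟨by omega, lt_of_lt_of_le h (hc (by omega))⟩
      have := card_le_card hsub
      simp only [card_range] at this
      omega
  -- `r` is the partition conjugate to `c`, with the parts indexed along `e`.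
  refine ⟨fun x => #{s' ∈ range K | (e x : ℕ) < c s'}, fun x => ?_, fun s => ?_⟩
  · exact (card_filter_le _ _).trans (card_range K).le
  · simp only [key]
    rw [card_equiv (t := {i : Fin (Fintype.card ι) | (i : ℕ) < c s}) e (fun x => by simp),
      Fin.card_filter_val_lt]
    have := hc (Nat.zero_le s)
    omega

lemma sum_natCast_sub_emod {s : ℕ} (hι : Fintype.card ι = n) {r : ι → ℕ}
    (hr : ∀ x, r x ≤ n) (hs : s ≤ n) :
    ∑ x, ((s : ℤ) - r x) % (n + 1) = n * s - ∑ x, (r x : ℤ) + (n + 1) * #{x | s < r x} := by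
  have hterm : ∀ x, ((s : ℤ) - r x) % (n + 1) = s - r x + (n + 1) * if s < r x then 1 else 0 := by
    intro x
    have := hr x
    split_ifs with h
    · rw [mul_one, Int.emod_eq_add_self_emod, Int.emod_eq_of_lt (by omega) (by omega)]
    · rw [mul_zero, add_zero, Int.emod_eq_of_lt (by omega) (by omega)]
  rw [sum_congr rfl fun x _ => hterm x, sum_add_distrib, sum_sub_distrib, ← mul_sum, sum_boole,
    sum_const, card_univ, hι]
  simp

lemma exists_le_of_lt_count {k m : ℕ} {r : ι → ℕ} (hr : ∀ x, r x ≤ n) (hk : ∑ x, r x ≤ k)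
    (hkm : k < count n m) : ∃ s ≤ n, n * s + (n + 1) * #{x | s < r x} + k ≤ m + ∑ x, r x := by
  by_contra! h
  set R := ∑ x, r x
  have := count_le (n := n) m
  set M := m + R - k
  have hfiber : ∀ s ∈ range (n + 1), countFiber n s M ≤ #{x | s < r x} :=
    fun s hs => countFiber_le_iff.2 (by have := h s (by simpa [Nat.lt_succ_iff] using hs); omega)
  have hR : ∑ s ∈ range (n + 1), #{x | s < r x} = R :=
    sum_card_filter_lt fun x => (hr x).trans n.le_succ
  have hcountM : count n M ≤ R := by
    rw [count_eq_sum_countFiber, ← hR]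
    exact sum_le_sum hfiber
  have := count_le_add (n := n) (show M ≤ m by omega)
  omega

lemma exists_lt_of_count (hn : 1 ≤ n) (hι : Fintype.card ι = n) (m : ℕ) :
    ∃ r : ι → ℕ, (∀ x, r x ≤ n) ∧ ∑ x, r x ≤ count n m ∧
      ∀ s ≤ n, m + ∑ x, r x < count n m + n * s + (n + 1) * #{x | s < r x} := by
  -- Past `n * n - 1` every integer lies in the semigroup, so `count` grows by one per step on
  -- `(M, m]`; and `M < n * n` empties the fibre `s = n`.
  set M := min m (n * n - 1)
  have hnn : n * (n - 1) ≤ n * n := Nat.mul_le_mul_left n (Nat.sub_le n 1)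
  have hnn' : n ≤ n * n := Nat.le_mul_of_pos_left n hn
  have hM : count n m = count n M + (m - M) :=
    count_eq_add (min_le_left _ _) fun x hx _ => mem_of_le hn (by omega)
  have hc0 : countFiber n 0 M ≤ Fintype.card ι := by
    rw [hι]
    exact countFiber_le_iff.2 (by rw [add_mul]; omega)
  have hcn : countFiber n n M = 0 := Nat.le_zero.1 (countFiber_le_iff.2 (by omega))
  obtain ⟨r, hr, hcard⟩ := exists_card_filter_lt_eq (countFiber_antitone M) hc0 hcn
  have hR : ∑ x, r x = count n M := by
    rw [← sum_card_filter_lt (K := n + 1) fun x => (hr x).trans n.le_succ,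
      count_eq_sum_countFiber]
    simp only [hcard]
  refine ⟨r, hr, by omega, fun s _ => ?_⟩
  have := countFiber_le_iff.1 (le_refl (countFiber n s M))
  rw [hcard]
  omega

end Residues

end consecSemigroup

lemma emod_le_self_of_nonneg {a b : ℤ} (ha : 0 ≤ a) (hb : 0 < b) : a % b ≤ a := by
  have := Int.emod_add_mul_ediv a b
  have := Int.ediv_nonneg ha hb.le
  nlinarith

namespace Multigraph

open consecSemigroup

variable {G : Multigraph}

lemma deg_lap (f : G.V → ℤ) : G.deg (G.lap f) = 0 := by
  have h : ∑ v, ∑ w, (G.adj v w : ℤ) * (f v - f w) =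
      ∑ v, ∑ w, -((G.adj v w : ℤ) * (f v - f w)) := by
    conv_lhs => rw [sum_comm]
    refine sum_congr rfl fun w _ => sum_congr rfl fun v _ => ?_
    rw [G.adj_symm]
    ring
  simp only [sum_neg_distrib] at h
  unfold deg lap
  linarith

lemma deg_add (D E : G.V → ℤ) : G.deg (D + E) = G.deg D + G.deg E :=
  sum_add_distrib

lemma deg_sub (D E : G.V → ℤ) : G.deg (D - E) = G.deg D - G.deg E :=
  sum_sub_distrib ..

lemma deg_pt (P : G.V) (m : ℤ) : G.deg (G.pt P m) = m := by
  simp [deg, pt]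

lemma deg_eq_add_sum_ne (P : G.V) (D : G.V → ℤ) : G.deg D = D P + ∑ v : {v // v ≠ P}, D v :=
  Fintype.sum_eq_add_sum_subtype_ne D P

lemma effective_pt (P : G.V) {m : ℤ} (hm : 0 ≤ m) : G.Effective (G.pt P m) := by
  intro v
  unfold pt
  split_ifs <;> omega

lemma LinNonempty.add_effective {D F : G.V → ℤ} (hD : G.LinNonempty D) (hF : G.Effective F) :
    G.LinNonempty (D + F) := by
  obtain ⟨f, hf⟩ := hD
  refine ⟨f, fun v => ?_⟩
  have := hf v
  have := hF v
  simp only [Pi.add_apply, Pi.sub_apply] at *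
  omega

lemma LinNonempty.deg_nonneg {D : G.V → ℤ} (hD : G.LinNonempty D) : 0 ≤ G.deg D := by
  obtain ⟨f, hf⟩ := hD
  have : 0 ≤ G.deg (D - G.lap f) := sum_nonneg fun v _ => hf v
  rwa [deg_sub, deg_lap, sub_zero] at this

lemma rank_of_deg_neg {D : G.V → ℤ} (h : G.deg D < 0) : G.rank D = -1 :=
  if_neg fun hD => h.not_ge hD.deg_nonneg

lemma rank_eq_of_forall_of_exists {D : G.V → ℤ} (k : ℕ)
    (hall : ∀ E, G.Effective E → G.deg E = k → G.LinNonempty (D - E))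
    (hex : ∃ E, G.Effective E ∧ G.deg E = k + 1 ∧ ¬ G.LinNonempty (D - E)) :
    G.rank D = k := by
  obtain ⟨v⟩ := G.nonemptyV
  have hD : G.LinNonempty D := by
    simpa using (hall _ (effective_pt v k.cast_nonneg) (deg_pt v k)).add_effective
      (effective_pt v k.cast_nonneg)
  set K := {j : ℕ | ∀ E, G.Effective E → G.deg E = j → G.LinNonempty (D - E)}
  have hdown : ∀ j ∈ K, ∀ i ≤ j, i ∈ K := by
    intro j hj i hij E hE hdeg
    set F := G.pt v (j - i : ℕ)
    have hF : G.Effective F := effective_pt v (Nat.cast_nonneg _)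
    have := (hj (E + F) (fun w => add_nonneg (hE w) (hF w)) (by
      rw [deg_add, deg_pt, hdeg]; push_cast [hij]; ring)).add_effective hF
    rwa [sub_add_eq_sub_sub, sub_add_cancel] at this
  have hbdd : ∀ j ∈ K, j ≤ k := by
    intro j hj
    by_contra! hkj
    obtain ⟨E, hE, hdeg, hE'⟩ := hex
    exact hE' (hdown j hj (k + 1) hkj E hE (by exact_mod_cast hdeg))
  rw [rank, if_pos hD]
  change ((sSup K : ℕ) : ℤ) = k
  have hk : k ∈ K := hall
  rw [le_antisymm (csSup_le ⟨k, hk⟩ hbdd) (le_csSup ⟨k, hbdd⟩ hk)]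

variable {n : ℕ}

lemma lap_of_isComplete (hG : G.IsComplete (n + 1)) (f : G.V → ℤ) (v : G.V) :
    G.lap f v = (n + 1) * f v - ∑ w, f w := by
  have hterm : ∀ w, (G.adj v w : ℤ) * (f v - f w) = f v - f w := by
    intro w
    by_cases h : v = w
    · simp [h]
    · simp [hG.2 v w h]
  simp only [lap, hterm, sum_sub_distrib, sum_const, card_univ, hG.1, nsmul_eq_mul]
  push_cast
  ring

lemma card_ne_of_isComplete (hG : G.IsComplete (n + 1)) (P : G.V) :
    Fintype.card {v // v ≠ P} = n := by
  simp [hG.1]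

lemma linNonempty_iff_of_isComplete (hG : G.IsComplete (n + 1)) (P : G.V) (D : G.V → ℤ) :
    G.LinNonempty D ↔ ∃ σ : ℤ, ∑ v : {v // v ≠ P}, (D v + σ) % (n + 1) ≤ G.deg D := by
  have hN : (0 : ℤ) < n + 1 := by positivity
  constructor
  · rintro ⟨f, hf⟩
    refine ⟨∑ w, f w, ?_⟩
    have hterm : ∀ v, (D v + ∑ w, f w) % (n + 1) ≤ (D - G.lap f) v := by
      intro v
      have hv := hf v
      rw [Pi.sub_apply, lap_of_isComplete hG] at hv ⊢
      calc (D v + ∑ w, f w) % (n + 1)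
          = (D v - ((n + 1) * f v - ∑ w, f w) + (n + 1) * f v) % (n + 1) := by ring_nf
        _ = (D v - ((n + 1) * f v - ∑ w, f w)) % (n + 1) := Int.add_mul_emod_self_left ..
        _ ≤ _ := emod_le_self_of_nonneg hv hN
    calc ∑ v : {v // v ≠ P}, (D v + ∑ w, f w) % (n + 1)
        ≤ ∑ v : {v // v ≠ P}, (D - G.lap f) v := sum_le_sum fun v _ => hterm v
      _ ≤ (D - G.lap f) P + ∑ v : {v // v ≠ P}, (D - G.lap f) v := le_add_of_nonneg_left (hf P)
      _ = G.deg D := by rw [← deg_eq_add_sum_ne, deg_sub, deg_lap, sub_zero]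
  · rintro ⟨σ, hσ⟩
    set q : G.V → ℤ := fun v => (D v + σ) / (n + 1)
    set f : G.V → ℤ := fun v => if v = P then σ - ∑ w : {v // v ≠ P}, q w else q v
    have hf : ∑ w, f w = σ := by
      rw [Fintype.sum_eq_add_sum_subtype_ne _ P]
      simp only [f, if_pos rfl]
      rw [sum_congr rfl fun w _ => if_neg w.2]
      ring
    refine ⟨f, fun v => ?_⟩
    rw [Pi.sub_apply, lap_of_isComplete hG, hf]
    by_cases hv : v = P
    · -- the slack at `P` is `deg D` minus the residue sum
      rw [hv]
      have hsum : ∑ w : {v // v ≠ P}, ((D w + σ) % (n + 1) + (n + 1) * q w) =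
          ∑ w : {v // v ≠ P}, D w + n * σ := by
        simp only [q, Int.emod_add_mul_ediv, sum_add_distrib, sum_const, card_univ,
          card_ne_of_isComplete hG, nsmul_eq_mul]
      rw [sum_add_distrib, ← mul_sum] at hsum
      rw [deg_eq_add_sum_ne P] at hσ
      simp only [f, if_pos rfl]
      linarith
    · have := Int.emod_add_mul_ediv (D v + σ) (n + 1)
      have := Int.emod_nonneg (D v + σ) hN.ne'
      simp only [f, if_neg hv]
      linarith

lemma linNonempty_pt_sub_of_lt_count (hG : G.IsComplete (n + 1)) (P : G.V) (m : ℕ)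
    {E : G.V → ℤ} (hE : G.Effective E) {k : ℕ} (hdeg : G.deg E = k) (hk : k < count n m) :
    G.LinNonempty (G.pt P m - E) := by
  have hN : (0 : ℤ) < n + 1 := by positivity
  set r : {v // v ≠ P} → ℕ := fun v => (E v % (n + 1)).toNat
  have hr_cast : ∀ v, (r v : ℤ) = E v % (n + 1) :=
    fun v => Int.toNat_of_nonneg (Int.emod_nonneg _ hN.ne')
  have hr : ∀ v, r v ≤ n := fun v => by
    have := hr_cast v
    have := Int.emod_lt_of_pos (E v) hN
    omega
  have hRk : ∑ v, r v ≤ k := by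
    have : ∑ v, (r v : ℤ) ≤ k :=
      calc ∑ v, (r v : ℤ) ≤ ∑ v : {v // v ≠ P}, E v :=
            sum_le_sum fun v _ => hr_cast v ▸ emod_le_self_of_nonneg (hE v) hN
        _ ≤ E P + ∑ v : {v // v ≠ P}, E v := le_add_of_nonneg_left (hE P)
        _ = k := by rw [← deg_eq_add_sum_ne, hdeg]
    exact_mod_cast this
  obtain ⟨s, hs, hsum⟩ := exists_le_of_lt_count hr hRk hk
  have hterm : ∀ v : {v // v ≠ P},
      ((G.pt P m - E) v + s) % (n + 1) = ((s : ℤ) - r v) % (n + 1) := by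
    intro v
    simp only [Pi.sub_apply, pt, if_neg v.2, hr_cast, Int.sub_emod_emod]
    ring_nf
  rw [linNonempty_iff_of_isComplete hG P]
  refine ⟨s, ?_⟩
  rw [sum_congr rfl fun v _ => hterm v, sum_natCast_sub_emod (card_ne_of_isComplete hG P) hr hs,
    deg_sub, deg_pt, hdeg]
  have : ((n * s + (n + 1) * #{x | s < r x} + k : ℕ) : ℤ) ≤ (m + ∑ x, r x : ℕ) := by
    exact_mod_cast hsum
  push_cast at this
  linarith

lemma exists_not_linNonempty_pt_sub (hn : 1 ≤ n) (hG : G.IsComplete (n + 1)) (P : G.V) (m : ℕ) :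
    ∃ E, G.Effective E ∧ G.deg E = count n m ∧ ¬ G.LinNonempty (G.pt P m - E) := by
  have hN : (0 : ℤ) < n + 1 := by positivity
  obtain ⟨r, hr, hRk, hlt⟩ := exists_lt_of_count hn (card_ne_of_isComplete hG P) m
  set E : G.V → ℤ := fun v => if h : v = P then count n m - ∑ w, r w else r ⟨v, h⟩
  have hEv : ∀ v : {v // v ≠ P}, E v = r v := fun v => dif_neg v.2
  have hdeg : G.deg E = count n m := by
    rw [deg_eq_add_sum_ne P, sum_congr rfl fun v _ => hEv v]
    simp only [E, dif_pos rfl]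
    push_cast
    ring
  refine ⟨E, fun v => ?_, hdeg, ?_⟩
  · by_cases h : v = P
    · simp only [E, dif_pos h]
      omega
    · simp only [E, dif_neg h]
      positivity
  rw [linNonempty_iff_of_isComplete hG P]
  rintro ⟨σ, hσ⟩
  set s := (σ % (n + 1)).toNat
  have hs_cast : (s : ℤ) = σ % (n + 1) := Int.toNat_of_nonneg (Int.emod_nonneg _ hN.ne')
  have hs : s ≤ n := by
    have := Int.emod_lt_of_pos σ hN
    omega
  have hterm : ∀ v : {v // v ≠ P},
      ((G.pt P m - E) v + σ) % (n + 1) = ((s : ℤ) - r v) % (n + 1) := by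
    intro v
    simp only [Pi.sub_apply, pt, if_neg v.2, hEv, hs_cast, Int.emod_sub_emod]
    ring_nf
  rw [sum_congr rfl fun v _ => hterm v, sum_natCast_sub_emod (card_ne_of_isComplete hG P) hr hs,
    deg_sub, deg_pt, hdeg] at hσ
  have : ((m + ∑ x, r x : ℕ) : ℤ) < (count n m + n * s + (n + 1) * #{x | s < r x} : ℕ) := by
    exact_mod_cast hlt s hs
  push_cast at this
  linarith

lemma rank_pt_of_isComplete (hn : 1 ≤ n) (hG : G.IsComplete (n + 1)) (P : G.V) (m : ℕ) :
    G.rank (G.pt P m) = count n m - 1 := by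
  obtain ⟨k, hk⟩ := Nat.exists_eq_add_of_le' (one_le_count (n := n) m)
  obtain ⟨E, hE, hdeg, hnot⟩ := exists_not_linNonempty_pt_sub hn hG P m
  rw [hk, rank_eq_of_forall_of_exists k
    (fun E hE hdeg => linNonempty_pt_sub_of_lt_count hG P m hE hdeg (by omega))
    ⟨E, hE, by rw [hdeg, hk]; push_cast; ring, hnot⟩]
  push_cast
  ring

end Multigraph

/-- The rank Weierstrass set of the complete graph `K_{n+1}` is `⟨n, n+1⟩`. -/
theorem Hr_complete (n : ℕ) (hn : 1 ≤ n) (G : Multigraph) (hG : G.IsComplete (n + 1))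
    (P : G.V) :
    G.Hr P = {x : ℕ | ∃ a b : ℕ, x = a * n + b * (n + 1)} := by
  ext x
  show G.rank _ < G.rank _ ↔ x ∈ consecSemigroup n
  rcases x with _ | m
  · rw [Multigraph.rank_of_deg_neg (by simp [Multigraph.deg_pt]),
      Multigraph.rank_pt_of_isComplete hn hG P 0, consecSemigroup.count_zero]
    simpa using ⟨0, 0, by ring⟩
  · rw [Nat.cast_succ, add_sub_cancel_right, ← Nat.cast_succ,
      Multigraph.rank_pt_of_isComplete hn hG P, Multigraph.rank_pt_of_isComplete hn hG P,
      consecSemigroup.count_succ]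
    split_ifs with h <;> simp [h]
end

section
/- For every numerical semigroup S there exists a simple graph G and a vertex P ∈ V(G) such that the functional Weierstrass set of G at P equals S, i.e., H_f(P) = S. -/
open scoped Classical

/-! Choose `c > 0` with `[c, ∞) ⊆ S` and glue, at a common vertex `P`, one complete bipartite
graph `K_{c+1, a}` for each `a ∈ S ∩ [1, 2c]`, with `P` on the side of size `c + 1`. The function
equal to `1` on the block of `a` away from `P` and `0` elsewhere has a unique pole, of order `a`,
at `P`; since `H_f(P)` is a monoid and these `a` generate `S`, we get `S ⊆ H_f(P)`. Conversely,
normalise a function with a unique pole at `P` so that it vanishes at `P`: its pole order is the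
sum over the blocks of its values `T` on the side of size `a`, and nonnegativity of the Laplacian
inside a block forces `T ≥ 0` and either `a ∣ T` or `T ≥ c a`, so `T ∈ S` in both cases. -/

namespace Multigraph

variable (G : Multigraph)

lemma lap_zero : G.lap 0 = 0 := by
  ext v; simp [lap]

lemma lap_add (f g : G.V → ℤ) : G.lap (f + g) = G.lap f + G.lap g := by
  ext v; simp only [lap, Pi.add_apply, ← Finset.sum_add_distrib]; congr 1; ext w; ring

lemma lap_sub_const (f : G.V → ℤ) (c : ℤ) : G.lap (fun v => f v - c) = G.lap f := by
  ext v; simp only [lap]; congr 1; ext w; ring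

def hfSubmonoid (P : G.V) : AddSubmonoid ℕ where
  carrier := G.Hf P
  zero_mem' := ⟨0, by simp [lap_zero]⟩
  add_mem' := by
    rintro m n ⟨f, hfP, hf⟩ ⟨g, hgP, hg⟩
    refine ⟨f + g, ?_, fun Q hQ => ?_⟩
    · rw [lap_add, Pi.add_apply, hfP, hgP]; push_cast; ring
    · simpa [lap_add] using add_nonneg (hf Q hQ) (hg Q hQ)

noncomputable def ofSimpleGraph {V : Type} [Fintype V] [DecidableEq V] (H : SimpleGraph V)
    (hH : H.Connected) : Multigraph where
  V := V
  nonemptyV := hH.nonempty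
  adj u v := if H.Adj u v then 1 else 0
  adj_symm u v := by simp only [H.adj_comm]
  adj_loopless v := by simp
  conn u v := by
    refine Relation.ReflTransGen.mono (fun a b hab => ?_) u v
      ((H.reachable_iff_reflTransGen u v).1 (hH u v))
    simp [hab]

variable {V : Type} [Fintype V] [DecidableEq V] {H : SimpleGraph V} (hH : H.Connected)

lemma ofSimpleGraph_simple [Nontrivial V] : (ofSimpleGraph H hH).Simple :=
  ⟨fun u v => by dsimp [ofSimpleGraph]; split_ifs <;> simp, Fintype.one_lt_card (α := V)⟩

lemma lap_ofSimpleGraph (f : V → ℤ) (v : V) :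
    (ofSimpleGraph H hH).lap f v = ∑ w, if H.Adj v w then f v - f w else 0 := by
  simp only [lap, ofSimpleGraph]
  refine Finset.sum_congr rfl fun w _ => ?_
  split_ifs <;> simp

end Multigraph

namespace AddSubmonoid

variable {S : AddSubmonoid ℕ} {c : ℕ}

lemma exists_forall_le_mem_of_finite_compl (hS : ((S : Set ℕ)ᶜ).Finite) :
    ∃ c, 0 < c ∧ ∀ m, c ≤ m → m ∈ S := by
  obtain ⟨B, hB⟩ := hS.bddAbove
  exact ⟨B + 1, B.succ_pos, fun m hm => by_contra fun h => by have := hB h; omega⟩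

lemma mem_of_dvd_or_mul_le {a m : ℕ} (haS : a ∈ S) (hc : ∀ m, c ≤ m → m ∈ S) (ha : 0 < a)
    (h : a ∣ m ∨ c * a ≤ m) : m ∈ S := by
  rcases h with ⟨d, rfl⟩ | h
  · simpa [mul_comm] using S.nsmul_mem haS d
  · exact hc m ((Nat.le_mul_of_pos_right c ha).trans h)

lemma le_closure_filter_Icc (hc0 : 0 < c) (hc : ∀ m, c ≤ m → m ∈ S) :
    S ≤ closure ((Finset.Icc 1 (2 * c)).filter (· ∈ S) : Set ℕ) := by
  intro n hn
  induction n using Nat.strong_induction_on with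
  | _ n ih =>
    rcases Nat.eq_zero_or_pos n with rfl | hn0
    · exact zero_mem _
    by_cases hn2c : n ≤ 2 * c
    · exact subset_closure (by simp [hn2c, hn, Nat.one_le_iff_ne_zero.2 hn0.ne'])
    · have hcA : c ∈ (Finset.Icc 1 (2 * c)).filter (· ∈ S) :=
        Finset.mem_filter.2 ⟨Finset.mem_Icc.2 ⟨hc0, by omega⟩, hc c le_rfl⟩
      rw [← Nat.add_sub_cancel' (show c ≤ n by omega)]
      exact add_mem (subset_closure hcA) (ih _ (by omega) (hc _ (by omega)))

end AddSubmonoid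

section BipartiteBlock

variable {s t : ℕ} {α : Fin s → ℤ} {β : Fin t → ℤ}

lemma bipartite_sum_nonneg (hα : ∀ k, ∑ j, β j ≤ t * α k)
    (hβ : ∀ j, ∑ k, α k ≤ (s + 1) * β j) : 0 ≤ ∑ j, β j := by
  have h₁ : s * ∑ j, β j ≤ t * ∑ k, α k := by
    simpa [Finset.mul_sum] using Finset.sum_le_sum fun k (_ : k ∈ Finset.univ) => hα k
  have h₂ : t * ∑ k, α k ≤ (s + 1) * ∑ j, β j := by
    simpa [Finset.mul_sum] using Finset.sum_le_sum fun j (_ : j ∈ Finset.univ) => hβ j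
  linarith

/- With `q = ⌊T / t⌋` and `t ∤ T`, the first inequality pushes every `α k` above `q`, and then,
because `q < s`, the second pushes every `β j` above `q`, so that `T ≥ t (q + 1)`. -/
lemma bipartite_dvd_sum_or_le_sum (hα : ∀ k, ∑ j, β j ≤ t * α k)
    (hβ : ∀ j, ∑ k, α k ≤ (s + 1) * β j) : (t : ℤ) ∣ ∑ j, β j ∨ s * t ≤ ∑ j, β j := by
  set T := ∑ j, β j
  by_contra! ⟨hndvd, hlt⟩
  have hT := bipartite_sum_nonneg hα hβ
  have ht : (0 : ℤ) < t := by by_contra! h; nlinarith [Int.natCast_nonneg s]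
  set q := T / t
  have hdiv : t * q + T % t = T := Int.mul_ediv_add_emod T t
  have hr : 0 < T % t :=
    (Int.emod_nonneg T ht.ne').lt_of_ne' fun h => hndvd (Int.dvd_of_emod_eq_zero h)
  have hqT : t * q < T := by linarith
  have hTq : T < t * (q + 1) := by linarith [Int.emod_lt_of_pos T ht]
  have hqs : q < s := by nlinarith
  have hα' : ∀ k, q + 1 ≤ α k := fun k => by nlinarith [hα k]
  have hsum : s * (q + 1) ≤ ∑ k, α k := by
    simpa using Finset.sum_le_sum fun k (_ : k ∈ Finset.univ) => hα' k
  have hβ' : ∀ j, q + 1 ≤ β j := fun j => by nlinarith [hβ j]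
  have : t * (q + 1) ≤ T := by
    simpa using Finset.sum_le_sum fun j (_ : j ∈ Finset.univ) => hβ' j
  linarith

end BipartiteBlock

namespace Multigraph

section Bouquet

variable {ι : Type} (σ : ℕ) (a : ι → ℕ)

/- `none` is the common vertex `P`; block `i` is a copy of `K_{σ+1, a i}` made of `P`, the
vertices `inl k` on the side of `P`, and the vertices `inr j` on the other side. -/
abbrev BouquetVertex := Option (Σ i : ι, Fin σ ⊕ Fin (a i))

def bouquetAdj : BouquetVertex σ a → BouquetVertex σ a → Prop
  | none, some ⟨_, .inr _⟩ | some ⟨_, .inr _⟩, none => True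
  | some ⟨i, .inl _⟩, some ⟨i', .inr _⟩ | some ⟨i, .inr _⟩, some ⟨i', .inl _⟩ => i = i'
  | _, _ => False

def bouquetGraph : SimpleGraph (BouquetVertex σ a) where
  Adj := bouquetAdj σ a
  symm := ⟨by rintro (_ | ⟨i, k | j⟩) (_ | ⟨i', k' | j'⟩) <;> simp [bouquetAdj, eq_comm]⟩
  loopless := ⟨by rintro (_ | ⟨i, k | j⟩) <;> simp [bouquetAdj]⟩

variable {a}

lemma bouquetGraph_connected (ha : ∀ i, 0 < a i) : (bouquetGraph σ a).Connected := by
  refine (SimpleGraph.connected_iff_exists_forall_reachable _).2 ⟨none, ?_⟩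
  have toRight (i : ι) (j : Fin (a i)) : (bouquetGraph σ a).Reachable none (some ⟨i, .inr j⟩) :=
    SimpleGraph.Adj.reachable trivial
  rintro (_ | ⟨i, k | j⟩)
  · rfl
  · exact (toRight i ⟨0, ha i⟩).trans (SimpleGraph.Adj.reachable rfl)
  · exact toRight i j

variable [Fintype ι]

noncomputable def bouquet (ha : ∀ i, 0 < a i) : Multigraph :=
  ofSimpleGraph (bouquetGraph σ a) (bouquetGraph_connected σ ha)

lemma sum_bouquetVertex {M : Type} [AddCommMonoid M] (g : BouquetVertex σ a → M) :
    ∑ v, g v = g none + ∑ i, ((∑ k, g (some ⟨i, .inl k⟩)) + ∑ j, g (some ⟨i, .inr j⟩)) := by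
  rw [Fintype.sum_option, Fintype.sum_sigma]
  simp only [Fintype.sum_sum_type]

variable {σ} (ha : ∀ i, 0 < a i)

lemma bouquet_simple [Nonempty ι] : (bouquet σ ha).Simple :=
  have i : ι := Classical.arbitrary ι
  have : Nontrivial (BouquetVertex σ a) :=
    ⟨none, some ⟨i, .inr ⟨0, ha i⟩⟩, (Option.some_ne_none _).symm⟩
  ofSimpleGraph_simple _

lemma lap_bouquet_none (f : BouquetVertex σ a → ℤ) :
    (bouquet σ ha).lap f none = ∑ i, ∑ j, (f none - f (some ⟨i, .inr j⟩)) := by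
  refine (lap_ofSimpleGraph _ f _).trans ?_
  rw [sum_bouquetVertex]
  simp [bouquetGraph, bouquetAdj]

lemma lap_bouquet_left (f : BouquetVertex σ a → ℤ) (i : ι) (k : Fin σ) :
    (bouquet σ ha).lap f (some ⟨i, .inl k⟩) =
      ∑ j, (f (some ⟨i, .inl k⟩) - f (some ⟨i, .inr j⟩)) := by
  refine (lap_ofSimpleGraph _ f _).trans ?_
  rw [sum_bouquetVertex,
    Fintype.sum_eq_single i fun i' hi' => by simp [bouquetGraph, bouquetAdj, hi'.symm]]
  simp [bouquetGraph, bouquetAdj]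

lemma lap_bouquet_right (f : BouquetVertex σ a → ℤ) (i : ι) (j : Fin (a i)) :
    (bouquet σ ha).lap f (some ⟨i, .inr j⟩) =
      (f (some ⟨i, .inr j⟩) - f none) + ∑ k, (f (some ⟨i, .inr j⟩) - f (some ⟨i, .inl k⟩)) := by
  refine (lap_ofSimpleGraph _ f _).trans ?_
  rw [sum_bouquetVertex,
    Fintype.sum_eq_single i fun i' hi' => by simp [bouquetGraph, bouquetAdj, hi'.symm]]
  simp [bouquetGraph, bouquetAdj]

lemma mem_Hf_bouquet (i : ι) : a i ∈ (bouquet σ ha).Hf none := by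
  let f : BouquetVertex σ a → ℤ := fun v => v.elim 0 fun x => if x.1 = i then 1 else 0
  refine ⟨f, ?_, ?_⟩
  · rw [lap_bouquet_none]
    simp [f, apply_ite Finset.card]
  · rintro (_ | ⟨i', k | j⟩) hQ
    · exact absurd rfl hQ
    · rw [lap_bouquet_left]
      simp [f]
    · rw [lap_bouquet_right]
      by_cases h : i' = i <;> simp [f, h]

lemma exists_mem_eq_sum_right_of_lap_nonneg {S : AddSubmonoid ℕ} (haS : ∀ i, a i ∈ S)
    (hσS : ∀ m, σ ≤ m → m ∈ S) {f : BouquetVertex σ a → ℤ} (hf : f none = 0)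
    (hQ : ∀ Q, Q ≠ none → 0 ≤ (bouquet σ ha).lap f Q) (i : ι) :
    ∃ m ∈ S, (m : ℤ) = ∑ j, f (some ⟨i, .inr j⟩) := by
  have hα (k : Fin σ) : ∑ j, f (some ⟨i, .inr j⟩) ≤ a i * f (some ⟨i, .inl k⟩) := by
    have := hQ (some ⟨i, .inl k⟩) (Option.some_ne_none _)
    rw [lap_bouquet_left] at this
    simpa [Finset.sum_sub_distrib] using this
  have hβ (j : Fin (a i)) : ∑ k, f (some ⟨i, .inl k⟩) ≤ (σ + 1) * f (some ⟨i, .inr j⟩) := by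
    have := hQ (some ⟨i, .inr j⟩) (Option.some_ne_none _)
    rw [lap_bouquet_right, hf] at this
    simp only [Finset.sum_sub_distrib, Finset.sum_const, Finset.card_univ, Fintype.card_fin,
      nsmul_eq_mul] at this
    linarith
  have hdvd := bipartite_dvd_sum_or_le_sum hα hβ
  lift ∑ j, f (some ⟨i, .inr j⟩) to ℕ using bipartite_sum_nonneg hα hβ with m
  exact ⟨m, AddSubmonoid.mem_of_dvd_or_mul_le (haS i) hσS (ha i) (by exact_mod_cast hdvd), rfl⟩

lemma Hf_bouquet_subset {S : AddSubmonoid ℕ} (haS : ∀ i, a i ∈ S) (hσS : ∀ m, σ ≤ m → m ∈ S) :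
    (bouquet σ ha).Hf none ⊆ S := by
  rintro n ⟨f₀, hP, hQ⟩
  set f : BouquetVertex σ a → ℤ := fun v => f₀ v - f₀ none
  have hlap : (bouquet σ ha).lap f = (bouquet σ ha).lap f₀ := lap_sub_const _ f₀ (f₀ none)
  have hf : f none = 0 := sub_self _
  choose m hmS hm using
    exists_mem_eq_sum_right_of_lap_nonneg ha haS hσS hf (hlap ▸ hQ)
  have hn : (n : ℤ) = ∑ i, (m i : ℤ) := by
    rw [← hlap, lap_bouquet_none, hf] at hP
    simp only [hm]
    simpa using hP.symm
  rw [show n = ∑ i, m i by exact_mod_cast hn]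
  exact sum_mem fun i _ => hmS i

end Bouquet

end Multigraph

/-- Every numerical semigroup (cofinite additive submonoid of `ℕ`) is the
functional Weierstrass set of some simple graph at some vertex. -/
theorem Hf_realizes_numericalSemigroup (S : AddSubmonoid ℕ)
    (hS : ((S : Set ℕ)ᶜ).Finite) :
    ∃ (G : Multigraph) (P : G.V), G.Simple ∧ G.Hf P = (S : Set ℕ) := by
  obtain ⟨c, hc0, hc⟩ := AddSubmonoid.exists_forall_le_mem_of_finite_compl hS
  set A := (Finset.Icc 1 (2 * c)).filter (· ∈ S)
  have hA : ∀ a : A, 0 < (a : ℕ) := fun a => (Finset.mem_Icc.1 (Finset.mem_filter.1 a.2).1).1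
  have hcA : c ∈ A := Finset.mem_filter.2 ⟨Finset.mem_Icc.2 ⟨hc0, by omega⟩, hc c le_rfl⟩
  have : Nonempty A := ⟨⟨c, hcA⟩⟩
  refine ⟨Multigraph.bouquet c hA, none, Multigraph.bouquet_simple hA,
    (Multigraph.Hf_bouquet_subset hA (fun a => (Finset.mem_filter.1 a.2).2) hc).antisymm ?_⟩
  calc (S : Set ℕ) ⊆ AddSubmonoid.closure (A : Set ℕ) :=
        AddSubmonoid.le_closure_filter_Icc hc0 hc
    _ ⊆ (Multigraph.bouquet c hA).hfSubmonoid none :=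
      AddSubmonoid.closure_le.2 fun a ha => Multigraph.mem_Hf_bouquet hA ⟨a, ha⟩
end
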